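/- Let α ∈ ℂ⟦x,y,p⟧ be a formal power series such that the constant term of ∂α/∂x is 0 (so that 1 + ∂α/∂x + p·∂α/∂y is a unit of ℂ⟦x,y,p⟧). Let β₀ ∈ ℂ⟦x,y,p⟧ with ∂β₀/∂p = 0. Then there exists one and only one β ∈ ℂ⟦x,y,p⟧ satisfying the first-order equation (1 + ∂α/∂x + p·∂α/∂y)·∂β/∂p − p·(∂α/∂p)·(∂β/∂y) − (∂α/∂p)·(∂β/∂x) = p·∂α/∂p together with the initial condition β − β₀ ∈ (p), the ideal generated by p. -/

import Mathlib

/-- The formal partial derivative `∂/∂x_i` on a multivariate formal power series ring. -/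
noncomputable def mvDeriv {σ R : Type*} [CommRing R] (i : σ)
    (f : MvPowerSeries σ R) : MvPowerSeries σ R :=
  fun α => (α i + 1 : ℕ) • MvPowerSeries.coeff (α + Finsupp.single i 1) f

namespace ContactCauchy

/-- `ℂ⟦x,y,p⟧`, with `x, y, p` the variables indexed by `0, 1, 2 : Fin 3`. -/
abbrev A := MvPowerSeries (Fin 3) ℂ

noncomputable abbrev dx (f : A) : A := mvDeriv (0 : Fin 3) f
noncomputable abbrev dy (f : A) : A := mvDeriv (1 : Fin 3) f
noncomputable abbrev dp (f : A) : A := mvDeriv (2 : Fin 3) f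
noncomputable abbrev p : A := MvPowerSeries.X (2 : Fin 3)

end ContactCauchy

/-!
With `U = 1 + ∂α/∂x + p ∂α/∂y`, a unit, the equation reads `∂β/∂p = F β` where
`F β = (∂α/∂p (p ∂β/∂y + ∂β/∂x) + p ∂α/∂p) U⁻¹`. As `∂/∂x` and `∂/∂y` do not lower the `p`-adic
order, the Picard operator `β ↦ β₀ + ∫ F β dp` raises the `p`-adic order of differences by one.
The solutions of the Cauchy problem are exactly its fixed points, and by `p`-adic completeness
it has exactly one: the limit of its iterates.
-/

namespace MvPowerSeries

open Finsupp

variable {σ R : Type*}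

theorem mvDeriv_eq_pderiv [CommRing R] (i : σ) (f : MvPowerSeries σ R) :
    mvDeriv i f = pderiv R i f := by
  ext m
  rw [coeff_pderiv, mul_comm, ← Nat.cast_succ, ← nsmul_eq_mul]
  rfl

theorem X_pow_dvd_pderiv_of_ne [CommSemiring R] {i j : σ} {n : ℕ} {f : MvPowerSeries σ R}
    (hij : i ≠ j) (h : X j ^ n ∣ f) : X j ^ n ∣ pderiv R i f := by
  rw [X_pow_dvd_iff] at h ⊢
  intro m hm
  rw [coeff_pderiv, h, zero_mul]
  rwa [Finsupp.add_apply, single_eq_of_ne hij.symm, add_zero]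

section Integral

variable [Field R] (i : σ)

/-- The antiderivative in `X i` with no `X i`-free terms: where `m i = 0`, the factor
`(m i : R)⁻¹` is the junk value `0⁻¹ = 0`. -/
noncomputable def pintegral : MvPowerSeries σ R →ₗ[R] MvPowerSeries σ R where
  toFun f m := (m i : R)⁻¹ * coeff (m - single i 1) f
  map_add' f g := by
    ext m
    exact (congrArg _ (map_add _ f g)).trans (mul_add _ _ _)
  map_smul' r f := by
    ext m
    exact (congrArg _ (map_smul _ r f)).trans (mul_left_comm _ _ _)

theorem coeff_pintegral (f : MvPowerSeries σ R) (m : σ →₀ ℕ) :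
    coeff m (pintegral i f) = (m i : R)⁻¹ * coeff (m - single i 1) f :=
  rfl

theorem X_pow_succ_dvd_pintegral {n : ℕ} {f : MvPowerSeries σ R} (h : X i ^ n ∣ f) :
    X i ^ (n + 1) ∣ pintegral i f := by
  rw [X_pow_dvd_iff] at h ⊢
  intro m hm
  rw [coeff_pintegral]
  rcases eq_or_ne (m i) 0 with h0 | h0
  · rw [h0, Nat.cast_zero, inv_zero, zero_mul]
  · rw [h (m - single i 1) (by rw [tsub_apply, single_eq_same]; omega), mul_zero]

theorem X_dvd_pintegral (f : MvPowerSeries σ R) : X i ∣ pintegral i f := by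
  simpa only [zero_add, pow_one] using X_pow_succ_dvd_pintegral i (n := 0) (by simp)

variable [CharZero R]

theorem pderiv_pintegral (f : MvPowerSeries σ R) : pderiv R i (pintegral i f) = f := by
  ext m
  rw [coeff_pderiv, coeff_pintegral, add_tsub_cancel_right, Finsupp.add_apply, single_eq_same]
  push_cast
  field_simp

theorem pintegral_pderiv_of_X_dvd {f : MvPowerSeries σ R} (h : X i ∣ f) :
    pintegral i (pderiv R i f) = f := by
  ext m
  rw [coeff_pintegral, coeff_pderiv]
  rcases eq_or_ne (m i) 0 with h0 | h0
  · rw [h0, X_dvd_iff.mp h m h0, Nat.cast_zero, inv_zero, zero_mul]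
  · have hle : single i 1 ≤ m := single_le_iff.mpr (Nat.pos_of_ne_zero h0)
    have hcast : ((m - single i 1 : σ →₀ ℕ) i : R) + 1 = m i := by
      rw [tsub_apply, single_eq_same]
      norm_cast
      omega
    rw [tsub_add_cancel_of_le hle, hcast]
    field_simp

end Integral

section CauchyProblem

theorem eq_of_forall_X_pow_dvd_sub [Ring R] {i : σ} {f g : MvPowerSeries σ R}
    (h : ∀ n, X i ^ n ∣ f - g) : f = g := by
  ext m
  rw [← sub_eq_zero, ← map_sub]
  exact X_pow_dvd_iff.mp (h (m i + 1)) m (Nat.lt_succ_self _)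

/-- Completeness for the `X i`-adic topology. -/
theorem exists_forall_X_pow_dvd_sub [Ring R] {i : σ} (u : ℕ → MvPowerSeries σ R)
    (hu : ∀ n, X i ^ n ∣ u (n + 1) - u n) : ∃ L, ∀ n, X i ^ n ∣ L - u n := by
  have hcauchy : ∀ n k, n ≤ k → X i ^ n ∣ u k - u n := by
    intro n k hnk
    induction k, hnk using Nat.le_induction with
    | base => rw [sub_self]; exact dvd_zero _
    | succ k hnk ih =>
      rw [← sub_add_sub_cancel]
      exact dvd_add ((pow_dvd_pow _ hnk).trans (hu k)) ih
  let L : MvPowerSeries σ R := fun m => coeff m (u (m i + 1))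
  refine ⟨L, fun n => X_pow_dvd_iff.mpr fun m hm => ?_⟩
  rw [map_sub, show coeff m L = coeff m (u (m i + 1)) from rfl, ← neg_sub, neg_eq_zero,
    ← map_sub]
  exact X_pow_dvd_iff.mp (hcauchy _ n hm) m (Nat.lt_succ_self _)

theorem existsUnique_fixedPoint_of_X_pow_dvd [Ring R] (i : σ)
    (Φ : MvPowerSeries σ R → MvPowerSeries σ R)
    (hΦ : ∀ n f g, X i ^ n ∣ f - g → X i ^ (n + 1) ∣ Φ f - Φ g) : ∃! f, Φ f = f := by
  have hiterate : ∀ n, X i ^ n ∣ Φ^[n + 1] 0 - Φ^[n] 0 := by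
    intro n
    induction n with
    | zero => exact one_dvd _
    | succ n ih =>
      simp only [Function.iterate_succ_apply'] at ih ⊢
      exact hΦ n _ _ ih
  obtain ⟨L, hL⟩ := exists_forall_X_pow_dvd_sub (fun n => Φ^[n] 0) hiterate
  have hfix : Φ L = L := eq_of_forall_X_pow_dvd_sub (i := i) fun n => by
    have hΦL : X i ^ (n + 1) ∣ Φ L - Φ^[n + 1] 0 := by
      rw [Function.iterate_succ_apply']
      exact hΦ n _ _ (hL n)
    rw [← sub_sub_sub_cancel_right _ _ (Φ^[n + 1] 0)]
    exact (pow_dvd_pow _ n.le_succ).trans (dvd_sub hΦL (hL (n + 1)))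
  refine ⟨L, hfix, fun g hg => eq_of_forall_X_pow_dvd_sub (i := i) fun n => ?_⟩
  induction n with
  | zero => exact one_dvd _
  | succ n ih =>
    rw [← hg, ← hfix]
    exact hΦ n _ _ ih

theorem existsUnique_pderiv_eq_of_X_pow_dvd [Field R] [CharZero R] (i : σ)
    (F : MvPowerSeries σ R → MvPowerSeries σ R)
    (hF : ∀ n f g, X i ^ n ∣ f - g → X i ^ n ∣ F f - F g)
    {f₀ : MvPowerSeries σ R} (hf₀ : pderiv R i f₀ = 0) :
    ∃! f, pderiv R i f = F f ∧ X i ∣ f - f₀ := by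
  have hsolution : ∀ f, (pderiv R i f = F f ∧ X i ∣ f - f₀) ↔ f₀ + pintegral i (F f) = f := by
    refine fun f => ⟨fun ⟨hf, hdvd⟩ => ?_, fun hf => ⟨?_, ?_⟩⟩
    · calc f₀ + pintegral i (F f) = f₀ + pintegral i (pderiv R i (f - f₀)) := by
            rw [map_sub, hf₀, sub_zero, hf]
        _ = f := by rw [pintegral_pderiv_of_X_dvd i hdvd, add_sub_cancel]
    · calc pderiv R i f = pderiv R i (f₀ + pintegral i (F f)) := by rw [hf]
        _ = F f := by rw [map_add, hf₀, pderiv_pintegral, zero_add]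
    · rw [← hf, add_sub_cancel_left]
      exact X_dvd_pintegral i _
  rw [existsUnique_congr hsolution]
  refine existsUnique_fixedPoint_of_X_pow_dvd i _ fun n f g h => ?_
  rw [add_sub_add_left_eq_sub, ← map_sub]
  exact X_pow_succ_dvd_pintegral i (hF n f g h)

end CauchyProblem

end MvPowerSeries

namespace ContactCauchy

open MvPowerSeries

noncomputable def rhs (α β : A) : A :=
  (dp α * (p * dy β + dx β) + p * dp α) * (1 + dx α + p * dy α)⁻¹

theorem p_pow_dvd_rhs_sub (α : A) {n : ℕ} {β β' : A} (h : p ^ n ∣ β - β') :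
    p ^ n ∣ rhs α β - rhs α β' := by
  have hdiff : rhs α β - rhs α β' =
      dp α * (p * pderiv ℂ 1 (β - β') + pderiv ℂ 0 (β - β')) * (1 + dx α + p * dy α)⁻¹ := by
    simp only [rhs, dy, dx, mvDeriv_eq_pderiv, map_sub]
    ring
  rw [hdiff]
  have hdy := X_pow_dvd_pderiv_of_ne (R := ℂ) (i := 1) (by decide) h
  have hdx := X_pow_dvd_pderiv_of_ne (R := ℂ) (i := 0) (by decide) h
  exact ((dvd_add (hdy.mul_left p) hdx).mul_left _).mul_right _

theorem equation_iff_dp_eq_rhs (α β : A) (hα : coeff (0 : Fin 3 →₀ ℕ) (dx α) = 0) :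
    (1 + dx α + p * dy α) * dp β - p * dp α * dy β - dp α * dx β = p * dp α ↔
      dp β = rhs α β := by
  have hunit : constantCoeff (1 + dx α + p * dy α) ≠ 0 := by
    rw [coeff_zero_eq_constantCoeff_apply] at hα
    simp [hα]
  rw [rhs, MvPowerSeries.eq_mul_inv_iff_mul_eq hunit]
  constructor <;> intro h <;> linear_combination h

/-- Let `α ∈ ℂ⟦x,y,p⟧` with constant term of `∂α/∂x` equal to `0` (so that
`1 + ∂α/∂x + p·∂α/∂y` is a unit), and let `β₀ ∈ ℂ⟦x,y,p⟧` with `∂β₀/∂p = 0`.  Then there is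
one and only one `β ∈ ℂ⟦x,y,p⟧` with
`(1 + ∂α/∂x + p·∂α/∂y)·∂β/∂p − p·(∂α/∂p)·(∂β/∂y) − (∂α/∂p)·(∂β/∂x) = p·∂α/∂p` and
`β − β₀ ∈ (p)`. -/
theorem contact_cauchy_problem_existence_uniqueness
    (α β₀ : A)
    (hα : MvPowerSeries.coeff (0 : Fin 3 →₀ ℕ) (dx α) = 0)
    (hβ₀ : dp β₀ = 0) :
    ∃! β : A,
      (1 + dx α + p * dy α) * dp β - p * dp α * dy β - dp α * dx β = p * dp α ∧
      β - β₀ ∈ Ideal.span {p} := by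
  rw [dp, mvDeriv_eq_pderiv] at hβ₀
  refine (existsUnique_congr fun β => ?_).mpr
    (existsUnique_pderiv_eq_of_X_pow_dvd 2 (rhs α) (fun _ _ _ => p_pow_dvd_rhs_sub α) hβ₀)
  rw [equation_iff_dp_eq_rhs α β hα, Ideal.mem_span_singleton, dp, mvDeriv_eq_pderiv]

end ContactCauchy
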